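/- For the tetra measurement TTR regarded as a map on 2×2 matrices, TTR(|0⟩⟨0|) = (1/√3)(|0⟩⟨0| ⊗ I/2) + (1 - 1/√3)(I/2 ⊗ I/2), and TTR(|1⟩⟨1|) = (1/√3)(|1⟩⟨1| ⊗ I/2) + (1 - 1/√3)(I/2 ⊗ I/2). -/

import Mathlib

set_option maxRecDepth 10000
set_option maxHeartbeats 1000000


open Matrix Complex Kronecker

abbrev M2 := Matrix (Fin 2) (Fin 2) ℂ
abbrev M4 := Matrix (Fin 2 × Fin 2) (Fin 2 × Fin 2) ℂ

def outer {n : Type*} (v w : n → ℂ) : Matrix n n ℂ := vecMulVec v (star w)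

/-- Two-qubit computational basis ket `|r₁ r₂⟩`. -/
def ket2 (r : Fin 2 × Fin 2) : Fin 2 × Fin 2 → ℂ := fun p => if p = r then 1 else 0

/-- Single-qubit computational basis ket. -/
def ket (i : Fin 2) : Fin 2 → ℂ := fun j => if j = i then 1 else 0

/-- The four tetra states `|χ(r₁r₂)⟩`, parametrized by the angle `θ̃`. -/
noncomputable def chi (θ : ℝ) : Fin 2 × Fin 2 → (Fin 2 → ℂ)
  | (0, 0) => ![(Real.cos θ : ℂ), Complex.exp (Complex.I * (Real.pi / 4)) * (Real.sin θ : ℂ)]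
  | (0, 1) => ![(Real.cos θ : ℂ), Complex.exp (-Complex.I * (3 * Real.pi / 4)) * (Real.sin θ : ℂ)]
  | (1, 0) => ![(Real.sin θ : ℂ), Complex.exp (-Complex.I * (Real.pi / 4)) * (Real.cos θ : ℂ)]
  | (1, 1) => ![(Real.sin θ : ℂ), Complex.exp (Complex.I * (3 * Real.pi / 4)) * (Real.cos θ : ℂ)]

/-- The tetra measurement as a map on 2×2 matrices:
`TTR(ρ) = Σ_r Tr[(1/2)|χ(r)⟩⟨χ(r)| ρ] |r⟩⟨r|`. -/
noncomputable def TTR (θ : ℝ) (ρ : M2) : M4 :=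
  ∑ r : Fin 2 × Fin 2,
    (((1 / 2 : ℂ) • (outer (chi θ r) (chi θ r) * ρ)).trace) • outer (ket2 r) (ket2 r)

theorem ttr_diagonal (θ : ℝ) (hθ : Real.cos θ ^ 2 = 1 / 2 + Real.sqrt 3 / 6) :
    TTR θ (outer (ket 0) (ket 0)) =
      ((1 : ℝ) / Real.sqrt 3 : ℂ) • (outer (ket 0) (ket 0) ⊗ₖ ((1 / 2 : ℂ) • (1 : M2)))
      + ((1 - 1 / Real.sqrt 3 : ℝ) : ℂ) •
          (((1 / 2 : ℂ) • (1 : M2)) ⊗ₖ ((1 / 2 : ℂ) • (1 : M2))) ∧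
    TTR θ (outer (ket 1) (ket 1)) =
      ((1 : ℝ) / Real.sqrt 3 : ℂ) • (outer (ket 1) (ket 1) ⊗ₖ ((1 / 2 : ℂ) • (1 : M2)))
      + ((1 - 1 / Real.sqrt 3 : ℝ) : ℂ) •
          (((1 / 2 : ℂ) • (1 : M2)) ⊗ₖ ((1 / 2 : ℂ) • (1 : M2))) := by
  have h3 : Real.sqrt 3 ^ 2 = 3 := Real.sq_sqrt (by norm_num)
  have h3pos : Real.sqrt 3 > 0 := Real.sqrt_pos.mpr (by norm_num)
  have hne : (Real.sqrt 3 : ℂ) ≠ 0 := by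
    exact_mod_cast (show (Real.sqrt 3 : ℝ) ≠ 0 from ne_of_gt h3pos)
  have hc : (Real.cos θ : ℂ) ^ 2 = 1 / 2 + (Real.sqrt 3 : ℂ) / 6 := by
    rw [← Complex.ofReal_pow, hθ]; push_cast; ring
  have hs' : Real.sin θ ^ 2 = 1 / 2 - Real.sqrt 3 / 6 := by
    have := Real.sin_sq_add_cos_sq θ; linarith
  have hs : (Real.sin θ : ℂ) ^ 2 = 1 / 2 - (Real.sqrt 3 : ℂ) / 6 := by
    rw [← Complex.ofReal_pow, hs']; push_cast; ring
  have hsc : ((Real.sqrt 3 : ℂ)) ^ 2 = 3 := by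
    rw [← Complex.ofReal_pow, h3]; norm_num
  have hc2 : Complex.cos (θ : ℂ) ^ 2 = 1 / 2 + (Real.sqrt 3 : ℂ) / 6 := by
    rw [← Complex.ofReal_cos]; exact hc
  have hs2 : Complex.sin (θ : ℂ) ^ 2 = 1 / 2 - (Real.sqrt 3 : ℂ) / 6 := by
    rw [← Complex.ofReal_sin]; exact hs
  have hn : ∀ z : ℂ, z.re = 0 → Complex.normSq (cexp z) = 1 := by
    intro z h
    rw [← Complex.sq_norm, Complex.norm_exp, h, Real.exp_zero, one_pow]
  have E1 : Complex.normSq (cexp (Complex.I * (↑Real.pi / 4))) = 1 := hn _ (by simp)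
  have E2 : Complex.normSq (cexp (-(Complex.I * (3 * ↑Real.pi / 4)))) = 1 := hn _ (by simp)
  have E3 : Complex.normSq (cexp (-(Complex.I * (↑Real.pi / 4)))) = 1 := hn _ (by simp)
  have E4 : Complex.normSq (cexp (Complex.I * (3 * ↑Real.pi / 4))) = 1 := hn _ (by simp)
  constructor <;>
  · ext ⟨i, j⟩ ⟨k, l⟩
    fin_cases i <;> fin_cases j <;> fin_cases k <;> fin_cases l <;>
      simp [TTR, Fintype.sum_prod_type, Fin.sum_univ_two, outer, vecMulVec,
        Matrix.trace, Matrix.diag, Matrix.mul_apply, ket, ket2, chi, Matrix.one_apply,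
        Complex.mul_conj, Complex.normSq_mul, Complex.normSq_ofReal,
        Prod.ext_iff,
        Matrix.kroneckerMap_apply, E1, E2, E3, E4, neg_mul,
        ← Complex.ofReal_sin, ← Complex.ofReal_cos] <;>
      simp only [Complex.ofReal_cos, Complex.ofReal_sin] <;>
      field_simp <;>
      first
        | linear_combination (4 * (Real.sqrt 3 : ℂ)) * hs2 - (2 / 3 : ℂ) * hsc
        | linear_combination (8 * (Real.sqrt 3 : ℂ) ^ 2) * hc2 + ((4 / 3) * (Real.sqrt 3 : ℂ)) * hsc
        | linear_combination (2 * (Real.sqrt 3 : ℂ)) * hc2 + (1 / 3 : ℂ) * hsc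
        | linear_combination (2 * (Real.sqrt 3 : ℂ)) * hs2 - (1 / 3 : ℂ) * hsc
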